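/- (Cotangent formula for the gradient of the one-ring area.) Let N ≥ 3, let v ∈ ℝ³ and let w : ZMod N → ℝ³ be a cyclic family of vertices such that for each i the three points v, w(i), w(i+1) are noncollinear. Define the one-ring area function A(x) = Σ_{i} (1/2)·‖(w(i) − x) × (w(i+1) − x)‖. For each i let α_i be the interior angle of the triangle [v, w(i), w(i+1)] at the vertex w(i+1) and let β_i be the interior angle of the triangle [v, w(i−1), w(i)] at the vertex w(i−1) (these are the two angles opposite the edge [w(i), v]). Then A is differentiable at v and its gradient at v equals (1/2)·Σ_{i} (cot α_i + cot β_i)·(v − w(i)). -/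

import Mathlib

/-!
The area `½‖(a - x) × (b - x)‖` of a triangle is the norm of an affine function of `x` with
linear part `u ↦ u × (a - b)`, so at a nondegenerate triangle its gradient is
`(a - b) × n / (2‖n‖)` with `n = (a - v) × (b - v)`. The BAC–CAB expansion writes this as a
combination of `v - a` and `v - b` with coefficients `⟪v - b, a - b⟫ / ‖n‖` and
`⟪v - a, b - a⟫ / ‖n‖`, which are the cotangents of the angles at `b` and `a` because
`cot ∠(x, y) = ⟪x, y⟫ / ‖x × y‖`. Summing over the one-ring and shifting the index of the
second family of terms gives the cotangent formula.
-/

open Real InnerProductGeometry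

/-- The cross product on `ℝ³ = EuclideanSpace ℝ (Fin 3)`. -/
noncomputable def cross3 (u v : EuclideanSpace ℝ (Fin 3)) : EuclideanSpace ℝ (Fin 3) :=
  (EuclideanSpace.equiv (Fin 3) ℝ).symm
    (crossProduct ((EuclideanSpace.equiv (Fin 3) ℝ) u) ((EuclideanSpace.equiv (Fin 3) ℝ) v))

open scoped RealInnerProductSpace

theorem HasFDerivAt.norm {G F : Type*} [NormedAddCommGroup G] [NormedSpace ℝ G]
    [NormedAddCommGroup F] [InnerProductSpace ℝ F] {f : G → F} {f' : G →L[ℝ] F} {x : G}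
    (hf : HasFDerivAt f f' x) (h0 : f x ≠ 0) :
    HasFDerivAt (‖f ·‖) (‖f x‖⁻¹ • (innerSL ℝ (f x)).comp f') x := by
  have hsq : ‖f x‖ ^ 2 ≠ 0 := by positivity
  convert hf.norm_sq.sqrt hsq using 1
  · simp [Real.sqrt_sq (norm_nonneg _)]
  · ext u
    simp only [smul_apply, ContinuousLinearMap.comp_apply, coe_innerSL_apply,
      smul_eq_mul, Real.sqrt_sq (norm_nonneg _), nsmul_eq_mul, Nat.cast_ofNat]
    field_simp

theorem HasGradientAt.sum {F ι : Type*} [NormedAddCommGroup F] [InnerProductSpace ℝ F]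
    [CompleteSpace F] {s : Finset ι} {f : ι → F → ℝ} {g : ι → F} {x : F}
    (h : ∀ i ∈ s, HasGradientAt (f i) (g i) x) :
    HasGradientAt (fun y => ∑ i ∈ s, f i y) (∑ i ∈ s, g i) x := by
  rw [hasGradientAt_iff_hasFDerivAt, map_sum]
  exact HasFDerivAt.fun_sum fun i hi => (h i hi).hasFDerivAt

local notation "E" => EuclideanSpace ℝ (Fin 3)

theorem EuclideanSpace.ext_fin_three {u v : E} (h0 : u 0 = v 0) (h1 : u 1 = v 1)
    (h2 : u 2 = v 2) : u = v := by
  ext i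
  fin_cases i <;> assumption

theorem real_inner_fin_three (x y : E) : ⟪x, y⟫ = x 0 * y 0 + x 1 * y 1 + x 2 * y 2 := by
  simp only [PiLp.inner_apply, RCLike.inner_apply, conj_trivial, Fin.sum_univ_three]
  ring

theorem cross3_apply_zero (u v : E) : cross3 u v 0 = u 1 * v 2 - u 2 * v 1 := by
  simp [cross3, crossProduct]

theorem cross3_apply_one (u v : E) : cross3 u v 1 = u 2 * v 0 - u 0 * v 2 := by
  simp [cross3, crossProduct]

theorem cross3_apply_two (u v : E) : cross3 u v 2 = u 0 * v 1 - u 1 * v 0 := by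
  simp [cross3, crossProduct]

theorem inner_cross3_self (x y : E) :
    ⟪cross3 x y, cross3 x y⟫ = ⟪x, x⟫ * ⟪y, y⟫ - ⟪x, y⟫ * ⟪x, y⟫ := by
  simp only [real_inner_fin_three, cross3_apply_zero, cross3_apply_one, cross3_apply_two]
  ring

theorem inner_cross3_rotate (n u c : E) : ⟪n, cross3 u c⟫ = ⟪cross3 c n, u⟫ := by
  simp only [real_inner_fin_three, cross3_apply_zero, cross3_apply_one, cross3_apply_two]
  ring

theorem cross3_sub_cross3_sub_sub (v a b : E) :
    cross3 (a - b) (cross3 (a - v) (b - v)) =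
      ⟪v - b, a - b⟫ • (v - a) + ⟪v - a, b - a⟫ • (v - b) := by
  refine EuclideanSpace.ext_fin_three ?_ ?_ ?_ <;>
    simp only [real_inner_fin_three, cross3_apply_zero, cross3_apply_one, cross3_apply_two,
      PiLp.add_apply, PiLp.sub_apply, PiLp.smul_apply, smul_eq_mul] <;>
    ring

theorem cross3_sub_sub_rotate (v a b : E) : cross3 (v - b) (a - b) = cross3 (a - v) (b - v) := by
  refine EuclideanSpace.ext_fin_three ?_ ?_ ?_ <;>
    simp only [cross3_apply_zero, cross3_apply_one, cross3_apply_two, PiLp.sub_apply] <;>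
    ring

theorem cross3_sub_sub_swap (v a b : E) : cross3 (v - a) (b - a) = -cross3 (a - v) (b - v) := by
  refine EuclideanSpace.ext_fin_three ?_ ?_ ?_ <;>
    simp only [cross3_apply_zero, cross3_apply_one, cross3_apply_two, PiLp.sub_apply,
      PiLp.neg_apply] <;>
    ring

theorem norm_cross3 (x y : E) : ‖cross3 x y‖ = sin (angle x y) * (‖x‖ * ‖y‖) := by
  rw [sin_angle_mul_norm_mul_norm, ← inner_cross3_self, real_inner_self_eq_norm_mul_norm,
    Real.sqrt_mul_self (norm_nonneg _)]

-- For parallel `x`, `y` both sides are `0` by the convention `a / 0 = 0`.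
theorem cot_angle_eq_inner_div_norm_cross3 (x y : E) :
    cot (angle x y) = ⟪x, y⟫ / ‖cross3 x y‖ := by
  rw [cot_eq_cos_div_sin, cos_angle, norm_cross3, div_div, mul_comm]

theorem cross3_sub_ne_zero_of_not_collinear {v a b : E}
    (h : ¬ Collinear ℝ ({v, a, b} : Set E)) : cross3 (a - v) (b - v) ≠ 0 := by
  rw [Set.insert_comm] at h
  have hsin : sin (EuclideanGeometry.angle a v b) ≠ 0 :=
    EuclideanGeometry.sin_ne_zero_of_not_collinear h
  have hav : a - v ≠ 0 := sub_ne_zero.2 (ne₁₂_of_not_collinear h)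
  have hbv : b - v ≠ 0 := sub_ne_zero.2 (ne₂₃_of_not_collinear h).symm
  rw [← norm_ne_zero_iff, norm_cross3]
  exact mul_ne_zero hsin (mul_ne_zero (norm_ne_zero_iff.2 hav) (norm_ne_zero_iff.2 hbv))

noncomputable def cross3Right (c : E) : E →L[ℝ] E :=
  LinearMap.toContinuousLinearMap
    ((EuclideanSpace.equiv (Fin 3) ℝ).symm.toLinearMap ∘ₗ
      crossProduct.flip (EuclideanSpace.equiv (Fin 3) ℝ c) ∘ₗ
      (EuclideanSpace.equiv (Fin 3) ℝ).toLinearMap)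

@[simp]
theorem cross3Right_apply (c u : E) : cross3Right c u = cross3 u c := rfl

theorem cross3_sub_sub (a b x : E) :
    cross3 (a - x) (b - x) = cross3 a b + cross3Right (a - b) x := by
  refine EuclideanSpace.ext_fin_three ?_ ?_ ?_ <;>
    simp only [cross3_apply_zero, cross3_apply_one, cross3_apply_two, cross3Right_apply,
      PiLp.add_apply, PiLp.sub_apply] <;>
    ring

theorem hasGradientAt_half_norm_cross3_sub {a b v : E} (h : cross3 (a - v) (b - v) ≠ 0) :
    HasGradientAt (fun x => (1/2 : ℝ) * ‖cross3 (a - x) (b - x)‖)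
      ((2 * ‖cross3 (a - v) (b - v)‖)⁻¹ • cross3 (a - b) (cross3 (a - v) (b - v))) v := by
  have hcross : HasFDerivAt (fun x => cross3 (a - x) (b - x)) (cross3Right (a - b)) v := by
    simpa only [cross3_sub_sub] using (cross3Right (a - b)).hasFDerivAt.const_add (cross3 a b)
  rw [hasGradientAt_iff_hasFDerivAt]
  refine ((hcross.norm h).const_mul (1/2 : ℝ)).congr_fderiv ?_
  ext u
  simp only [smul_apply, ContinuousLinearMap.comp_apply, cross3Right_apply,
    coe_innerSL_apply, inner_cross3_rotate, smul_eq_mul, map_smul,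
    InnerProductSpace.toDual_apply_apply]
  field_simp

theorem hasGradientAt_triangle_area {v a b : E} (h : ¬ Collinear ℝ ({v, a, b} : Set E)) :
    HasGradientAt (fun x => (1/2 : ℝ) * ‖cross3 (a - x) (b - x)‖)
      ((1/2 : ℝ) • (cot (angle (v - b) (a - b)) • (v - a)
        + cot (angle (v - a) (b - a)) • (v - b))) v := by
  convert hasGradientAt_half_norm_cross3_sub (cross3_sub_ne_zero_of_not_collinear h) using 1
  rw [cross3_sub_cross3_sub_sub, cot_angle_eq_inner_div_norm_cross3,
    cot_angle_eq_inner_div_norm_cross3, cross3_sub_sub_rotate, cross3_sub_sub_swap, norm_neg]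
  module

theorem gradient_one_ring_area_cotangent_general (N : ℕ) [NeZero N]
    (v : EuclideanSpace ℝ (Fin 3)) (w : ZMod N → EuclideanSpace ℝ (Fin 3))
    (hw : ∀ i : ZMod N,
      ¬ Collinear ℝ ({v, w i, w (i + 1)} : Set (EuclideanSpace ℝ (Fin 3)))) :
    HasGradientAt
      (fun x => ∑ i : ZMod N, (1/2 : ℝ) * ‖cross3 (w i - x) (w (i + 1) - x)‖)
      ((1/2 : ℝ) • ∑ i : ZMod N,
        (Real.cot (angle (v - w (i + 1)) (w i - w (i + 1)))
          + Real.cot (angle (v - w (i - 1)) (w i - w (i - 1)))) • (v - w i)) v := by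
  have hshift : ∑ i : ZMod N, cot (angle (v - w i) (w (i + 1) - w i)) • (v - w (i + 1))
      = ∑ i : ZMod N, cot (angle (v - w (i - 1)) (w i - w (i - 1))) • (v - w i) :=
    Fintype.sum_equiv (Equiv.addRight 1) _ _ fun i => by simp
  convert HasGradientAt.sum fun i _ => hasGradientAt_triangle_area (hw i) using 1
  simp only [← Finset.smul_sum, Finset.sum_add_distrib, add_smul, hshift]

/-- Cotangent formula for the gradient of the one-ring area: for a vertex `v` and a cyclic
family `w : ZMod N → ℝ³` of neighbours (each triangle `[v, w i, w (i+1)]` noncollinear), the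
one-ring area `x ↦ ∑ i, (1/2)‖(w i - x) × (w (i+1) - x)‖` is differentiable at `v` with
gradient `(1/2) ∑ i, (cot αᵢ + cot βᵢ) (v - w i)`, where `αᵢ` is the interior angle of
`[v, w i, w (i+1)]` at `w (i+1)` and `βᵢ` that of `[v, w (i-1), w i]` at `w (i-1)`. -/
theorem gradient_one_ring_area_cotangent (N : ℕ) [NeZero N] (hN : 3 ≤ N)
    (v : EuclideanSpace ℝ (Fin 3)) (w : ZMod N → EuclideanSpace ℝ (Fin 3))
    (hw : ∀ i : ZMod N,
      ¬ Collinear ℝ ({v, w i, w (i + 1)} : Set (EuclideanSpace ℝ (Fin 3)))) :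
    HasGradientAt
      (fun x => ∑ i : ZMod N, (1/2 : ℝ) * ‖cross3 (w i - x) (w (i + 1) - x)‖)
      ((1/2 : ℝ) • ∑ i : ZMod N,
        (Real.cot (angle (v - w (i + 1)) (w i - w (i + 1)))
          + Real.cot (angle (v - w (i - 1)) (w i - w (i - 1)))) • (v - w i)) v :=
  gradient_one_ring_area_cotangent_general N v w hw
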